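/- A separable Banach space X has the Point of Continuity Property if and only if Φ(X) is well-defined and Φ(X) < ω₁, where ω₁ is the first uncountable ordinal. -/

import Mathlib

open Metric Set Pointwise

noncomputable section

/-- The weak topology on a normed space `X`: the initial topology with respect to all
continuous linear functionals. -/
noncomputable def weakTop (X : Type*) [NormedAddCommGroup X] [NormedSpace ℝ X] :
    TopologicalSpace X :=
  ⨅ f : X →L[ℝ] ℝ, TopologicalSpace.induced (⇑f) inferInstance

/-- A set is weakly open if it is open for the weak topology. -/
def IsWeaklyOpen {X : Type*} [NormedAddCommGroup X] [NormedSpace ℝ X] (V : Set X) : Prop :=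
  @IsOpen X (weakTop X) V

/-- The derived set `σ_ε(K)`: remove from `K` the union of all weakly open sets `V` whose
trace on `K` has (norm) diameter `< ε`. -/
noncomputable def dSet {X : Type*} [NormedAddCommGroup X] [NormedSpace ℝ X] (ε : ℝ)
    (K : Set X) : Set X :=
  K \ ⋃₀ {V : Set X | IsWeaklyOpen V ∧ Metric.diam (V ∩ K) < ε}

/-- The transfinite iterates `σ_ε^α(K)`: `σ_ε^0(K) = K`, `σ_ε^{α+1}(K) = σ_ε(σ_ε^α(K))`,
and `σ_ε^α(K) = ⋂_{β<α} σ_ε^β(K)` for `α` a limit ordinal. -/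
noncomputable def dIter {X : Type*} [NormedAddCommGroup X] [NormedSpace ℝ X] (ε : ℝ)
    (K : Set X) (α : Ordinal.{0}) : Set X :=
  Ordinal.limitRecOn α K (fun _ ih => dSet ε ih)
    (fun o _ ih => ⋂ (β : Ordinal.{0}) (h : β < o), ih β h)

/-- `Φ(X, ε)`: the least ordinal `α` with `σ_ε^α(B_X) = ∅` (junk value `0` if there is none). -/
noncomputable def PhiEps (X : Type*) [NormedAddCommGroup X] [NormedSpace ℝ X] (ε : ℝ) :
    Ordinal.{0} :=
  sInf {γ : Ordinal.{0} | dIter ε (Metric.closedBall (0 : X) 1) γ = ∅}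

/-- `Φ(X, ε)` is well defined, i.e. some derived iterate of the unit ball is empty. -/
def PhiDefinedAt (X : Type*) [NormedAddCommGroup X] [NormedSpace ℝ X] (ε : ℝ) : Prop :=
  ∃ γ : Ordinal.{0}, dIter ε (Metric.closedBall (0 : X) 1) γ = ∅

/-- `Φ(X) < ∞`, i.e. `Φ(X, ε)` is well defined for every `ε > 0`. -/
def PhiDefined (X : Type*) [NormedAddCommGroup X] [NormedSpace ℝ X] : Prop :=
  ∀ ε : ℝ, 0 < ε → PhiDefinedAt X ε

/-- The weak-fragmentability index `Φ(X) = sup_{ε > 0} Φ(X, ε)`. -/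
noncomputable def Phi (X : Type*) [NormedAddCommGroup X] [NormedSpace ℝ X] : Ordinal.{0} :=
  ⨆ ε : {ε : ℝ // 0 < ε}, PhiEps X ε.1

/-- `X` has the Point of Continuity Property: every nonempty bounded norm-closed subset `F`
of `X` has a point at which the identity `(F, weak) → (F, norm)` is continuous. -/
def HasPCP (X : Type*) [NormedAddCommGroup X] [NormedSpace ℝ X] : Prop :=
  ∀ F : Set X, F.Nonempty → Bornology.IsBounded F → IsClosed F →
    ∃ x ∈ F, ∀ ε : ℝ, 0 < ε →
      ∃ V : Set X, IsWeaklyOpen V ∧ x ∈ V ∧ V ∩ F ⊆ Metric.ball x ε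

/-
If `σ_ε^γ(B_X) = ∅`, no nonempty `S ⊆ B_X` can satisfy `σ_ε(S) = S`: all its iterates would
equal `S`, yet they lie inside those of `B_X`. Hence every nonempty subset of `B_X`, and after
scaling every nonempty bounded set, has nonempty weakly open slices of arbitrarily small
diameter. For a closed bounded `F` in a Banach space, a nested sequence of such slices, each
with norm closure inside the previous one, shrinks by Cantor's intersection theorem to a point
of weak-to-norm continuity.

Conversely, under the PCP every nonempty iterate `σ_ε^α(B_X)` loses a point `x_α` at the next
step, witnessed by a weakly (hence norm) open set; a basic open set around `x_α` missing
`σ_ε^{α+1}(B_X)` then differs for different `α`. With a countable base this forces some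
iterate below `ω₁` to be empty. As `Φ(X, ε)` decreases in `ε`, `Φ(X)` is the supremum of the
countably many countable ordinals `Φ(X, 1/(n+1))`.
-/

open Bornology Topology
open scoped Ordinal

section WeakTopology

variable {X : Type*} [NormedAddCommGroup X] [NormedSpace ℝ X]

theorem weakTop_eq_weakSpace :
    weakTop X = (inferInstance : TopologicalSpace (WeakSpace ℝ X)) := by
  show _ = TopologicalSpace.induced (fun x y => (topDualPairing ℝ X).flip x y) Pi.topologicalSpace
  rw [Pi.topologicalSpace, induced_iInf]
  simp only [induced_compose]
  rfl

theorem isWeaklyOpen_iff {V : Set X} : IsWeaklyOpen V ↔ @IsOpen (WeakSpace ℝ X) _ V := by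
  rw [IsWeaklyOpen, weakTop_eq_weakSpace]
  exact Iff.rfl

theorem IsWeaklyOpen.isOpen {V : Set X} (h : IsWeaklyOpen V) : IsOpen V :=
  h.mono (le_iInf fun f => continuous_iff_le_induced.1 f.continuous)

theorem isWeaklyOpen_univ : IsWeaklyOpen (univ : Set X) :=
  isWeaklyOpen_iff.2 isOpen_univ

theorem IsWeaklyOpen.inter {V W : Set X} (hV : IsWeaklyOpen V) (hW : IsWeaklyOpen W) :
    IsWeaklyOpen (V ∩ W) :=
  isWeaklyOpen_iff.2 ((isWeaklyOpen_iff.1 hV).inter (isWeaklyOpen_iff.1 hW))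

theorem IsWeaklyOpen.smul {V : Set X} (h : IsWeaklyOpen V) {c : ℝ} (hc : c ≠ 0) :
    IsWeaklyOpen (c • V) :=
  isWeaklyOpen_iff.2 (isOpenMap_smul₀ (α := WeakSpace ℝ X) hc _ (isWeaklyOpen_iff.1 h))

theorem IsWeaklyOpen.exists_closure_subset {U : Set X} {x : X} (hU : IsWeaklyOpen U)
    (hx : x ∈ U) : ∃ W : Set X, IsWeaklyOpen W ∧ x ∈ W ∧ closure W ⊆ U := by
  have hUx : U ∈ @nhds (WeakSpace ℝ X) _ x := (isWeaklyOpen_iff.1 hU).mem_nhds hx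
  obtain ⟨C, hC, hCc, hCU⟩ := exists_mem_nhds_isClosed_subset hUx
  have hCc' : @IsClosed X _ C :=
    isOpen_compl_iff.1 ((isWeaklyOpen_iff (X := X)).2 hCc.isOpen_compl).isOpen
  refine ⟨@interior (WeakSpace ℝ X) _ C, (isWeaklyOpen_iff (X := X)).2 isOpen_interior,
    (mem_interior_iff_mem_nhds (X := WeakSpace ℝ X)).2 hC, ?_⟩
  exact (closure_minimal (X := X) (interior_subset (X := WeakSpace ℝ X)) hCc').trans hCU

end WeakTopology

section DerivedSets

variable {X : Type*} [NormedAddCommGroup X] [NormedSpace ℝ X] {ε : ℝ} {K : Set X}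

theorem dSet_subset : dSet ε K ⊆ K := sdiff_subset

theorem dIter_zero : dIter ε K 0 = K :=
  Ordinal.limitRecOn_zero _ _ _

theorem dIter_add_one (α : Ordinal) : dIter ε K (α + 1) = dSet ε (dIter ε K α) :=
  Ordinal.limitRecOn_add_one _ _ _ _

theorem dIter_limit {α : Ordinal} (h : Order.IsSuccLimit α) :
    dIter ε K α = ⋂ (β : Ordinal) (_ : β < α), dIter ε K β :=
  Ordinal.limitRecOn_limit _ _ _ _ h

theorem dIter_antitone : Antitone (dIter ε K) := by
  intro α β hαβ
  induction β using Ordinal.limitRecOn with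
  | zero => rw [nonpos_iff_eq_zero.1 hαβ]
  | add_one β ih =>
    rcases hαβ.lt_or_eq with h | rfl
    · exact (dIter_add_one β).trans_subset (dSet_subset.trans (ih (Order.lt_add_one_iff.1 h)))
    · exact subset_rfl
  | limit β hβ _ =>
    rcases hαβ.eq_or_lt with rfl | h
    · exact subset_rfl
    · exact (dIter_limit hβ).trans_subset (iInter₂_subset α h)

theorem dIter_subset (α : Ordinal) : dIter ε K α ⊆ K :=
  (dIter_antitone zero_le).trans_eq dIter_zero

theorem IsClosed.dSet (hK : IsClosed K) : IsClosed (dSet ε K) :=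
  hK.sdiff (isOpen_sUnion fun _ hV => hV.1.isOpen)

theorem IsClosed.dIter (hK : IsClosed K) (α : Ordinal) : IsClosed (dIter ε K α) := by
  induction α using Ordinal.limitRecOn with
  | zero => rwa [dIter_zero]
  | add_one α ih => rw [dIter_add_one]; exact ih.dSet
  | limit α hα ih =>
    rw [dIter_limit hα]
    exact isClosed_iInter fun β => isClosed_iInter fun hβ => ih β hβ

theorem dSet_mono {ε' : ℝ} (hε : ε ≤ ε') {S : Set X} (hSK : S ⊆ K) (hK : IsBounded K) :
    dSet ε' S ⊆ dSet ε K := by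
  rintro x ⟨hxS, hx⟩
  refine ⟨hSK hxS, fun ⟨V, ⟨hV, hVd⟩, hxV⟩ => hx ⟨V, ⟨hV, ?_⟩, hxV⟩⟩
  calc diam (V ∩ S) ≤ diam (V ∩ K) :=
        diam_mono (inter_subset_inter_right V hSK) (hK.subset inter_subset_right)
    _ < ε := hVd
    _ ≤ ε' := hε

theorem dIter_mono {ε' : ℝ} (hε : ε ≤ ε') {S : Set X} (hSK : S ⊆ K) (hK : IsBounded K)
    (α : Ordinal) : dIter ε' S α ⊆ dIter ε K α := by
  induction α using Ordinal.limitRecOn with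
  | zero => rwa [dIter_zero, dIter_zero]
  | add_one α ih =>
    rw [dIter_add_one, dIter_add_one]
    exact dSet_mono hε ih (hK.subset (dIter_subset _))
  | limit α hα ih =>
    rw [dIter_limit hα, dIter_limit hα]
    exact iInter₂_mono ih

theorem dIter_eq_self_of_dSet_eq (h : dSet ε K = K) (α : Ordinal) : dIter ε K α = K := by
  induction α using Ordinal.limitRecOn with
  | zero => exact dIter_zero
  | add_one α ih => rw [dIter_add_one, ih, h]
  | limit α hα ih =>
    rw [dIter_limit hα]
    exact subset_antisymm ((iInter₂_subset 0 hα.pos).trans (ih 0 hα.pos).subset)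
      (subset_iInter₂ fun β hβ => (ih β hβ).superset)

theorem exists_slice_of_dIter_eq_empty {γ : Ordinal} (hγ : dIter ε K γ = ∅) (hK : IsBounded K)
    {S : Set X} (hSK : S ⊆ K) (hS : S.Nonempty) :
    ∃ V : Set X, IsWeaklyOpen V ∧ (V ∩ S).Nonempty ∧ diam (V ∩ S) < ε := by
  have hSγ : dIter ε S γ = ∅ := subset_empty_iff.1 (hγ ▸ dIter_mono le_rfl hSK hK γ)
  have hfix : dSet ε S ≠ S := fun h => hS.ne_empty (dIter_eq_self_of_dSet_eq h γ ▸ hSγ)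
  obtain ⟨x, hxS, hx⟩ := not_subset.1 fun h => hfix (dSet_subset.antisymm h)
  obtain ⟨V, ⟨hV, hVd⟩, hxV⟩ : x ∈ ⋃₀ {V : Set X | IsWeaklyOpen V ∧ diam (V ∩ S) < ε} :=
    by_contra fun h => hx ⟨hxS, h⟩
  exact ⟨V, hV, ⟨x, hxV, hxS⟩, hVd⟩

end DerivedSets

section Fragmentability

variable {X : Type*} [NormedAddCommGroup X] [NormedSpace ℝ X]

/-- Meaningful for bounded `S` only: `Metric.diam` is `0` on unbounded sets. -/
def IsWeaklyFragmented (S : Set X) : Prop :=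
  ∀ ε > 0, ∀ T ⊆ S, T.Nonempty →
    ∃ V : Set X, IsWeaklyOpen V ∧ (V ∩ T).Nonempty ∧ diam (V ∩ T) < ε

theorem IsWeaklyFragmented.mono {S T : Set X} (h : IsWeaklyFragmented S) (hTS : T ⊆ S) :
    IsWeaklyFragmented T :=
  fun ε hε U hUT => h ε hε U (hUT.trans hTS)

theorem IsWeaklyFragmented.smul {S : Set X} (h : IsWeaklyFragmented S) {c : ℝ} (hc : c ≠ 0) :
    IsWeaklyFragmented (c • S) := by
  intro ε hε T hT hTne
  obtain ⟨V, hV, hVne, hVd⟩ :=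
    h (ε / ‖c‖) (by positivity) (c⁻¹ • T) ((subset_smul_set_iff₀ hc).1 hT) hTne.smul_set
  have hVT : c • V ∩ T = c • (V ∩ c⁻¹ • T) := by rw [smul_set_inter₀ hc, smul_inv_smul₀ hc]
  refine ⟨c • V, hV.smul hc, hVT ▸ hVne.smul_set, ?_⟩
  rw [hVT, diam_smul₀]
  exact (lt_div_iff₀' (norm_pos_iff.2 hc)).1 hVd

theorem isWeaklyFragmented_of_isBounded (h : IsWeaklyFragmented (closedBall (0 : X) 1))
    {S : Set X} (hS : IsBounded S) : IsWeaklyFragmented S := by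
  obtain ⟨R, hR, hSR⟩ := hS.subset_closedBall_lt 0 0
  refine (h.smul hR.ne').mono (hSR.trans_eq ?_)
  rw [_root_.smul_closedBall _ _ zero_le_one, smul_zero, Real.norm_of_nonneg hR.le, mul_one]

theorem isWeaklyFragmented_closedBall_of_phiDefined (h : PhiDefined X) :
    IsWeaklyFragmented (closedBall (0 : X) 1) := fun ε hε _ hT hTne =>
  let ⟨_, hγ⟩ := h ε hε
  exists_slice_of_dIter_eq_empty hγ isBounded_closedBall hT hTne

theorem IsWeaklyFragmented.exists_shrink {F U : Set X} (hF : IsWeaklyFragmented F)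
    (hFb : IsBounded F) (hU : IsWeaklyOpen U) (hUF : (U ∩ F).Nonempty) {δ : ℝ} (hδ : 0 < δ) :
    ∃ W : Set X, IsWeaklyOpen W ∧ (W ∩ F).Nonempty ∧ closure W ⊆ U ∧ diam (W ∩ F) < δ := by
  obtain ⟨V, hV, ⟨x, hxV, hxU, hxF⟩, hVd⟩ := hF δ hδ (U ∩ F) inter_subset_right hUF
  obtain ⟨W, hW, hxW, hWV⟩ := (hV.inter hU).exists_closure_subset ⟨hxV, hxU⟩
  have hWF : W ∩ F ⊆ V ∩ (U ∩ F) := fun y ⟨hyW, hyF⟩ =>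
    ⟨(hWV (subset_closure hyW)).1, (hWV (subset_closure hyW)).2, hyF⟩
  refine ⟨W, hW, ⟨x, hxW, hxF⟩, hWV.trans inter_subset_right, ?_⟩
  exact (diam_mono hWF (hFb.subset (inter_subset_right.trans inter_subset_right))).trans_lt hVd

theorem IsWeaklyFragmented.exists_nested_seq {F : Set X} (hF : IsWeaklyFragmented F)
    (hFb : IsBounded F) (hFne : F.Nonempty) :
    ∃ U : ℕ → Set X, ∀ n, IsWeaklyOpen (U n) ∧ (U n ∩ F).Nonempty ∧
      closure (U (n + 1)) ⊆ U n ∧ diam (U n ∩ F) < 1 / (n + 1) := by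
  choose! shrink hshrink using fun (n : ℕ) (U : Set X) (hU : IsWeaklyOpen U)
    (hUF : (U ∩ F).Nonempty) => hF.exists_shrink hFb hU hUF (Nat.one_div_pos_of_nat (n := n))
  let U : ℕ → Set X := fun n => Nat.rec (shrink 0 univ) (fun n Un => shrink (n + 1) Un) n
  have hU : ∀ n, IsWeaklyOpen (U n) ∧ (U n ∩ F).Nonempty ∧ diam (U n ∩ F) < 1 / (n + 1) := by
    intro n
    induction n with
    | zero =>
      obtain ⟨hW, hWF, -, hWd⟩ := hshrink 0 univ isWeaklyOpen_univ (by simpa using hFne)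
      exact ⟨hW, hWF, by simpa [U] using hWd⟩
    | succ n ih =>
      obtain ⟨hW, hWF, -, hWd⟩ := hshrink (n + 1) (U n) ih.1 ih.2.1
      exact ⟨hW, hWF, by exact_mod_cast hWd⟩
  exact ⟨U, fun n => ⟨(hU n).1, (hU n).2.1, (hshrink (n + 1) (U n) (hU n).1 (hU n).2.1).2.2.1,
    (hU n).2.2⟩⟩

theorem IsWeaklyFragmented.exists_continuityPoint [CompleteSpace X] {F : Set X}
    (hF : IsWeaklyFragmented F) (hFb : IsBounded F) (hFc : IsClosed F) (hFne : F.Nonempty) :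
    ∃ x ∈ F, ∀ ε > 0, ∃ V : Set X, IsWeaklyOpen V ∧ x ∈ V ∧ V ∩ F ⊆ ball x ε := by
  obtain ⟨U, hU⟩ := hF.exists_nested_seq hFb hFne
  have hanti : Antitone U := antitone_nat_of_succ_le fun n => subset_closure.trans (hU n).2.2.1
  have hclosure : ∀ n, closure (U (n + 1) ∩ F) ⊆ U n ∩ F := fun n =>
    (closure_inter_subset_inter_closure _ _).trans
      (inter_subset_inter (hU n).2.2.1 hFc.closure_subset)
  obtain ⟨x, hx⟩ : (⋂ n, closure (U n ∩ F)).Nonempty := by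
    refine nonempty_iInter_of_nonempty_biInter (fun _ => isClosed_closure)
      (fun n => (hFb.subset inter_subset_right).closure) (fun N => ?_) ?_
    · obtain ⟨y, hy⟩ := (hU N).2.1
      exact ⟨y, mem_iInter₂.2 fun n hn =>
        subset_closure (inter_subset_inter_left F (hanti hn) hy)⟩
    · refine squeeze_zero (fun _ => diam_nonneg) (fun n => ?_)
        tendsto_one_div_add_atTop_nhds_zero_nat
      rw [diam_closure]
      exact (hU n).2.2.2.le
  have hxU : ∀ n, x ∈ U n ∩ F := fun n => hclosure n (mem_iInter.1 hx (n + 1))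
  refine ⟨x, (hxU 0).2, fun ε hε => ?_⟩
  obtain ⟨n, hn⟩ := exists_nat_one_div_lt hε
  refine ⟨U n, (hU n).1, (hxU n).1, fun y hy => ?_⟩
  calc dist y x ≤ diam (U n ∩ F) := dist_le_diam_of_mem (hFb.subset inter_subset_right) hy (hxU n)
    _ < 1 / (n + 1) := (hU n).2.2.2
    _ < ε := hn

theorem hasPCP_of_phiDefined [CompleteSpace X] (h : PhiDefined X) : HasPCP X :=
  fun _ hFne hFb hFc =>
    (isWeaklyFragmented_of_isBounded (isWeaklyFragmented_closedBall_of_phiDefined h)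
      hFb).exists_continuityPoint hFb hFc hFne

end Fragmentability

theorem countable_of_forall_lt_subset {Y ι : Type*} [TopologicalSpace Y]
    [SecondCountableTopology Y] [LinearOrder ι] (K L : ι → Set Y) (hL : ∀ i, IsClosed (L i))
    (hKL : ∀ i, (K i \ L i).Nonempty) (hlt : ∀ i j, i < j → K j ⊆ L i) : Countable ι := by
  obtain ⟨b, hbc, -, hb⟩ := TopologicalSpace.exists_countable_basis Y
  have : Countable b := hbc.to_subtype
  choose x hxK hxL using hKL
  choose t htb hxt htL using fun i => hb.exists_subset_of_mem_open (hxL i) (hL i).isOpen_compl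
  refine Function.Injective.countable (f := fun i => (⟨t i, htb i⟩ : b))
    (Function.Injective.of_lt_imp_ne fun i j hij hteq => ?_)
  have htij : t i = t j := congrArg Subtype.val hteq
  exact htL i (htij ▸ hxt j) (hlt i j hij (hxK j))

theorem not_countable_Iio_omega_one : ¬ Countable (Iio ω₁) := by
  rw [← Cardinal.mk_le_aleph0_iff, Cardinal.mk_Iio_ordinal]
  simp

section PCP

variable {X : Type*} [NormedAddCommGroup X] [NormedSpace ℝ X]

theorem HasPCP.nonempty_diff_dSet (hX : HasPCP X) {ε : ℝ} (hε : 0 < ε) {K : Set X}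
    (hK : K.Nonempty) (hKb : IsBounded K) (hKc : IsClosed K) : (K \ dSet ε K).Nonempty := by
  obtain ⟨x, hxK, hx⟩ := hX K hK hKb hKc
  obtain ⟨V, hV, hxV, hVK⟩ := hx (ε / 3) (by positivity)
  have hVd : diam (V ∩ K) < ε :=
    calc diam (V ∩ K) ≤ diam (ball x (ε / 3)) := diam_mono hVK isBounded_ball
      _ ≤ 2 * (ε / 3) := diam_ball (by positivity)
      _ < ε := by linarith
  exact ⟨x, hxK, fun hx' => hx'.2 ⟨V, ⟨hV, hVd⟩, hxV⟩⟩

theorem HasPCP.exists_dIter_eq_empty [TopologicalSpace.SeparableSpace X] (hX : HasPCP X)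
    {ε : ℝ} (hε : 0 < ε) : ∃ γ < ω₁, dIter ε (closedBall (0 : X) 1) γ = ∅ := by
  have : SecondCountableTopology X := UniformSpace.secondCountable_of_separable X
  by_contra! hne
  refine not_countable_Iio_omega_one (countable_of_forall_lt_subset
    (fun α : Iio (ω₁ : Ordinal.{0}) => dIter ε (closedBall (0 : X) 1) α.1)
    (fun α => dIter ε (closedBall 0 1) (α.1 + 1)) (fun α => isClosed_closedBall.dIter _)
    (fun α => ?_) (fun α β hαβ => dIter_antitone (Order.add_one_le_of_lt hαβ)))
  rw [dIter_add_one]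
  exact hX.nonempty_diff_dSet hε (hne α α.2)
    (isBounded_closedBall.subset (dIter_subset _)) (isClosed_closedBall.dIter _)

end PCP

section Index

variable {X : Type*} [NormedAddCommGroup X] [NormedSpace ℝ X]

theorem phiEps_le {ε : ℝ} {γ : Ordinal} (h : dIter ε (closedBall (0 : X) 1) γ = ∅) :
    PhiEps X ε ≤ γ :=
  csInf_le' h

theorem phiEps_le_phiEps {ε ε' : ℝ} (hε : ε ≤ ε') (h : PhiDefinedAt X ε) :
    PhiEps X ε' ≤ PhiEps X ε :=
  phiEps_le <| subset_empty_iff.1 <| (csInf_mem h : PhiEps X ε ∈ _) ▸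
    dIter_mono hε subset_rfl isBounded_closedBall _

theorem phi_le_iSup_nat (h : PhiDefined X) : Phi X ≤ ⨆ n : ℕ, PhiEps X (1 / (n + 1)) := by
  refine ciSup_le' fun ⟨ε, hε⟩ => ?_
  obtain ⟨n, hn⟩ := exists_nat_one_div_lt hε
  exact (phiEps_le_phiEps hn.le (h _ Nat.one_div_pos_of_nat)).trans (Ordinal.le_iSup _ n)

end Index

/-- **Proposition 2.5.** A separable Banach space has the PCP if and only if its
weak-fragmentability index is well defined and `< ω₁`. -/
theorem hasPCP_iff_phi_lt_omega1 (X : Type*) [NormedAddCommGroup X] [NormedSpace ℝ X]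
    [CompleteSpace X] [TopologicalSpace.SeparableSpace X] :
    HasPCP X ↔ PhiDefined X ∧ Phi X < (Cardinal.aleph 1).ord := by
  rw [Cardinal.ord_aleph]
  refine ⟨fun hX => ?_, fun h => hasPCP_of_phiDefined h.1⟩
  have hdef : PhiDefined X := fun ε hε =>
    let ⟨γ, _, hγ⟩ := hX.exists_dIter_eq_empty hε
    ⟨γ, hγ⟩
  refine ⟨hdef, (phi_le_iSup_nat hdef).trans_lt (Ordinal.iSup_lt_omega_one fun n => ?_)⟩
  obtain ⟨γ, hγ, hempty⟩ := hX.exists_dIter_eq_empty (X := X) (Nat.one_div_pos_of_nat (n := n))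
  exact (phiEps_le hempty).trans_lt hγ

end
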